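/- If G is a 2-connected graph, then a subset S of vertices is a dominating set in every spanning tree of G if and only if S is a vertex cover of G. -/

import Mathlib

open SimpleGraph

variable {V : Type*}

/-- Number of connected components of a graph. -/
noncomputable def numComponents (G : SimpleGraph V) : ℕ := Nat.card G.ConnectedComponent

/-- A vertex is a cut vertex if its removal increases the number of connected components. -/
def IsCutVertex (G : SimpleGraph V) (v : V) : Prop :=
  numComponents G < numComponents (G.induce {u | u ≠ v})

/-- `T` is a spanning tree of `G`: a subgraph on all vertices of `G` that is a tree. -/
def IsSpanningTree (G T : SimpleGraph V) : Prop := T ≤ G ∧ T.IsTree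

/-- `v` is dominated by `S` in the graph `T`. -/
def DominatedIn (T : SimpleGraph V) (S : Set V) (v : V) : Prop :=
  v ∈ S ∨ ∃ u ∈ S, T.Adj v u

/-- `v` is simultaneously dominated by `S`: dominated in every spanning tree of `G`. -/
def SimDominated (G : SimpleGraph V) (S : Set V) (v : V) : Prop :=
  ∀ T : SimpleGraph V, IsSpanningTree G T → DominatedIn T S v

/-- `S` is a simultaneous dominating set of `G`. -/
def IsSDSet (G : SimpleGraph V) (S : Set V) : Prop := ∀ v, SimDominated G S v

/-- `C` is a vertex cover of `G`. -/
def IsVertexCover (G : SimpleGraph V) (C : Set V) : Prop :=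
  ∀ ⦃u v : V⦄, G.Adj u v → u ∈ C ∨ v ∈ C

/-- A block of `G`: a maximal vertex set inducing a connected subgraph without cut vertices. -/
def IsBlock (G : SimpleGraph V) (B : Set V) : Prop :=
  B.Nonempty ∧ (G.induce B).Connected ∧ (∀ x, ¬ IsCutVertex (G.induce B) x) ∧
    ∀ B' : Set V, B ⊆ B' → (G.induce B').Connected →
      (∀ x, ¬ IsCutVertex (G.induce B') x) → B' = B

/-- 2-connected: connected, at least 3 vertices, no cut vertex. -/
def TwoConnected (G : SimpleGraph V) [Fintype V] : Prop :=
  G.Connected ∧ 3 ≤ Fintype.card V ∧ ∀ v, ¬ IsCutVertex G v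

/-- Colours 1, 0, 0̂. -/
inductive Col : Type
  | one | zero | zhat
deriving DecidableEq

/-- `S` is an `f`-respecting simultaneous dominating set of `G`. -/
def RespSDS (G : SimpleGraph V) (f : V → Col) (S : Set V) : Prop :=
  (∀ v, f v = Col.one → v ∈ S) ∧ ∀ v, f v = Col.zhat → SimDominated G S v

/-- A minimum `f`-respecting simultaneous dominating set. -/
def MinRespSDS (G : SimpleGraph V) (f : V → Col) (S : Set V) : Prop :=
  RespSDS G f S ∧ ∀ S' : Set V, RespSDS G f S' → S.ncard ≤ S'.ncard

/-
In a tree on at least two vertices every vertex has a neighbour, and every tree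
edge is an edge of `G`; so a vertex cover dominates every spanning tree. Conversely, if both
ends of an edge `uv` avoid `S`, then since `G - u` is connected, `G - u` plus the edge `uv` is a
connected spanning subgraph of `G`; any spanning tree of it has `u` as a leaf hanging from `v`,
and `S` does not dominate `u` there.
-/

lemma numComponents_eq_one {G : SimpleGraph V} (hG : G.Connected) : numComponents G = 1 := by
  have := hG.nonempty
  have := hG.preconnected.subsingleton_connectedComponent
  exact Nat.card_unique

lemma connected_of_numComponents_le_one [Finite V] [Nonempty V] {G : SimpleGraph V}
    (hG : numComponents G ≤ 1) : G.Connected := by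
  have := Finite.card_le_one_iff_subsingleton.mp hG
  exact (connected_iff G).mpr
    ⟨fun a b => ConnectedComponent.exact (Subsingleton.elim _ _), inferInstance⟩

lemma SimpleGraph.Connected.induce_ne_of_not_isCutVertex [Finite V] {G : SimpleGraph V} {u v : V}
    (hG : G.Connected) (hu : ¬ IsCutVertex G u) (hvu : v ≠ u) :
    (G.induce {w | w ≠ u}).Connected := by
  have : Nonempty {w | w ≠ u} := ⟨⟨v, hvu⟩⟩
  apply connected_of_numComponents_le_one
  rw [IsCutVertex, numComponents_eq_one hG, not_lt] at hu
  exact hu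

lemma exists_isSpanningTree_forall_adj_eq [Finite V] {G : SimpleGraph V} {u v : V}
    (huv : G.Adj u v) (hconn : (G.induce {w | w ≠ u}).Connected) :
    ∃ T, IsSpanningTree G T ∧ ∀ w, T.Adj u w → w = v := by
  set H := G.deleteIncidenceSet u ⊔ edge u v
  have hHG : H ≤ G := sup_le (G.deleteIncidenceSet_le u) ((edge_le_iff G).mpr (Or.inr huv))
  have hconn' : ((G.deleteIncidenceSet u).induce {w | w ≠ u}).Connected := by
    rwa [G.induce_deleteIncidenceSet_of_notMem (by simp)]
  have hH : H.Connected := by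
    refine (connected_iff_exists_forall_reachable H).mpr ⟨v, fun w => ?_⟩
    by_cases hwu : w = u
    · have huvH : H.Adj u v := Or.inr (by simp [edge_adj, huv.ne])
      exact hwu ▸ huvH.reachable.symm
    · exact ((hconn'.preconnected ⟨v, huv.ne'⟩ ⟨w, hwu⟩).map (Embedding.induce _).toHom).mono
        le_sup_left
  obtain ⟨T, hTH, hT⟩ := hH.exists_isTree_le
  refine ⟨T, ⟨hTH.trans hHG, hT⟩, fun w huw => ?_⟩
  rcases hTH huw with h | h
  · exact absurd rfl ((deleteIncidenceSet_adj.mp h).2.1)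
  · rw [edge_adj] at h
    grind

lemma IsVertexCover.isSDSet [Nontrivial V] {G : SimpleGraph V} {S : Set V}
    (hS : _root_.IsVertexCover G S) : IsSDSet G S := by
  intro v T hT
  obtain ⟨w, hvw⟩ := hT.2.connected.preconnected.exists_adj_of_nontrivial v
  rcases hS (hT.1 hvw) with hv | hw
  · exact Or.inl hv
  · exact Or.inr ⟨w, hw, hvw⟩

/-- In a 2-connected graph, `S` is a dominating set in every spanning tree iff
`S` is a vertex cover. -/
theorem stmt3 [Fintype V] (G : SimpleGraph V) (hG : TwoConnected G) (S : Set V) :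
    IsSDSet G S ↔ _root_.IsVertexCover G S := by
  obtain ⟨hconn, hcard, hcut⟩ := hG
  have : Nontrivial V := Fintype.one_lt_card_iff_nontrivial.mp (by omega)
  refine ⟨fun hS u v huv => ?_, IsVertexCover.isSDSet⟩
  by_contra! hnot
  obtain ⟨T, hT, hTu⟩ := exists_isSpanningTree_forall_adj_eq huv
    (hconn.induce_ne_of_not_isCutVertex (hcut u) huv.ne')
  rcases hS u T hT with hu | ⟨w, hw, huw⟩
  · exact hnot.1 hu
  · exact hnot.2 (hTu w huw ▸ hw)
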